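/- arXiv:1904.13290 — 3 statements merged into one kernel-verified Lean document; each statement's English description precedes it below -/
import Mathlib

section
/- The partial derivative ∂Y_i/∂s_j of the function Y_i(s) = (∫ f₀ p_i² (Σ_k s_k p_k²)^{-1/2} d³p)/(∫ f₀ (Σ_k s_k p_k²)^{1/2} d³p) is strictly negative for every i, j and every s in the open simplex, provided f₀ ≥ 0 is not a.e. zero. -/
/-!
Write `Q_s(p) = ∑ₖ sₖ pₖ²`, so that `Y_i = N / D` with `N = ∫ f₀ pᵢ² Q_s^(-1/2)` and
`D = ∫ f₀ Q_s^(1/2)`. Near a point with all `sₖ > 0`, `Q_s(p)` is comparable to `‖p‖²`, so every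
integrand `f₀ w Q_s^r` whose weight `w` has degree `1 - 2r`, together with its derivative in `s`, is
dominated by a multiple of `|f₀ p| ‖p‖`; differentiating under the integral sign gives
`∂ⱼN = -½ ∫ f₀ pᵢ² pⱼ² Q_s^(-3/2)` and `∂ⱼD = ½ ∫ f₀ pⱼ² Q_s^(-1/2)`. All these moments are positive
because `f₀ ≥ 0` is not a.e. zero and coordinate hyperplanes are null, so
`∂ⱼYᵢ = -(D · ½∫ f₀ pᵢ² pⱼ² Q_s^(-3/2) + N · ½∫ f₀ pⱼ² Q_s^(-1/2)) / D² < 0`.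
-/

open MeasureTheory

/-- The functional `Y_i(s)` of the normalized metric variables. -/
noncomputable def Yfun (f₀ : EuclideanSpace ℝ (Fin 3) → ℝ) (i : Fin 3) (s : Fin 3 → ℝ) : ℝ :=
  (∫ p : EuclideanSpace ℝ (Fin 3),
      f₀ p * (p i) ^ 2 * (∑ k, s k * (p k) ^ 2) ^ (-(1 : ℝ) / 2)) /
  (∫ p : EuclideanSpace ℝ (Fin 3),
      f₀ p * (∑ k, s k * (p k) ^ 2) ^ ((1 : ℝ) / 2))

open Filter Set Topology

section Quotient

variable {𝕜 E : Type*} [NontriviallyNormedField 𝕜] [NormedAddCommGroup E] [NormedSpace 𝕜 E]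
  {c d : E → 𝕜} {c' d' : E →L[𝕜] 𝕜} {x : E}

theorem HasFDerivAt.div (hc : HasFDerivAt c c' x) (hd : HasFDerivAt d d' x) (hx : d x ≠ 0) :
    HasFDerivAt (fun y => c y / d y) ((d x ^ 2)⁻¹ • (d x • c' - c x • d')) x := by
  simp only [div_eq_mul_inv]
  refine (hc.fun_mul ((hasDerivAt_inv hx).comp_hasFDerivAt x hd)).congr_fderiv ?_
  ext v
  simp only [smul_apply, sub_apply, smul_eq_mul, Function.comp_apply, add_apply, neg_mul, mul_neg]
  field_simp
  ring

end Quotient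

theorem integral_mul_pos_of_ae_pos {α : Type*} [MeasurableSpace α] {μ : Measure α}
    {f g : α → ℝ} (hf : 0 ≤ᵐ[μ] f) (hf0 : ¬ ∀ᵐ x ∂μ, f x = 0) (hg : ∀ᵐ x ∂μ, 0 < g x)
    (hfg : Integrable (fun x => f x * g x) μ) : 0 < ∫ x, f x * g x ∂μ := by
  have hfg0 : 0 ≤ᵐ[μ] fun x => f x * g x := by
    filter_upwards [hf, hg] with x hfx hgx using mul_nonneg hfx hgx.le
  rw [integral_pos_iff_support_of_nonneg_ae hfg0 hfg, pos_iff_ne_zero]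
  refine fun h => hf0 ?_
  filter_upwards [(Measure.measure_support_eq_zero_iff μ).mp h, hg] with x hx hgx
  simpa [hgx.ne'] using hx

theorem mul_le_of_le_rpow_one_sub {x a b C t : ℝ} (hx : 0 < x) (ha : a ≤ x ^ (1 - t))
    (hb0 : 0 ≤ b) (hb : b ≤ C * x ^ t) : a * b ≤ C * x := by
  calc a * b ≤ x ^ (1 - t) * (C * x ^ t) := mul_le_mul ha hb hb0 (Real.rpow_nonneg hx.le _)
    _ = C * x := by rw [mul_left_comm, ← Real.rpow_add hx, sub_add_cancel, Real.rpow_one]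

namespace EuclideanSpace

variable {ι : Type*} [Fintype ι]

theorem volume_coord_eq_zero (i : ι) : volume {p : EuclideanSpace ℝ ι | p i = 0} = 0 := by
  classical
  have hne : LinearMap.ker (EuclideanSpace.projₗ (𝕜 := ℝ) (ι := ι) i) ≠ ⊤ := fun h => by
    simpa using h.ge (Submodule.mem_top (x := EuclideanSpace.single i 1))
  exact Measure.addHaar_submodule volume _ hne

theorem ae_coord_ne_zero (i : ι) : ∀ᵐ p : EuclideanSpace ℝ ι, p i ≠ 0 :=
  measure_eq_zero_iff_ae_notMem.mp (volume_coord_eq_zero i)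

theorem ae_ne_zero [Nonempty ι] : ∀ᵐ p : EuclideanSpace ℝ ι, p ≠ 0 := by
  filter_upwards [ae_coord_ne_zero (Classical.arbitrary ι)] with p hp h0
  exact hp (by simp [h0])

end EuclideanSpace

variable {ι : Type*} [Fintype ι]

def diagQuad (s : ι → ℝ) (p : EuclideanSpace ℝ ι) : ℝ := ∑ k, s k * p k ^ 2

theorem continuous_diagQuad (s : ι → ℝ) : Continuous (diagQuad s) := by
  unfold diagQuad
  fun_prop

@[simp]
theorem diagQuad_single [DecidableEq ι] (j : ι) (p : EuclideanSpace ℝ ι) :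
    diagQuad (Pi.single j 1) p = p j ^ 2 := by
  simp [diagQuad, Pi.single_apply]

namespace diagQuad

variable {s : ι → ℝ} {p : EuclideanSpace ℝ ι} {c r : ℝ}

theorem nonneg (hs : ∀ k, 0 ≤ s k) (p : EuclideanSpace ℝ ι) : 0 ≤ diagQuad s p :=
  Finset.sum_nonneg fun k _ => mul_nonneg (hs k) (sq_nonneg _)

theorem mul_norm_sq_le (h : ∀ k, c ≤ s k) (p : EuclideanSpace ℝ ι) :
    c * ‖p‖ ^ 2 ≤ diagQuad s p := by
  rw [EuclideanSpace.real_norm_sq_eq, Finset.mul_sum]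
  exact Finset.sum_le_sum fun k _ => mul_le_mul_of_nonneg_right (h k) (sq_nonneg _)

theorem abs_le_norm_mul_norm_sq (s : ι → ℝ) (p : EuclideanSpace ℝ ι) :
    |diagQuad s p| ≤ ‖s‖ * ‖p‖ ^ 2 := by
  rw [EuclideanSpace.real_norm_sq_eq, Finset.mul_sum]
  refine (Finset.abs_sum_le_sum_abs _ _).trans (Finset.sum_le_sum fun k _ => ?_)
  rw [abs_mul, abs_sq]
  exact mul_le_mul_of_nonneg_right (norm_le_pi_norm s k) (sq_nonneg _)

theorem pos (hs : ∀ k, 0 < s k) (hp : p ≠ 0) : 0 < diagQuad s p := by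
  obtain ⟨k, hk⟩ : ∃ k, p k ≠ 0 := by
    by_contra! h
    exact hp (PiLp.ext h)
  exact Finset.sum_pos' (fun k _ => mul_nonneg (hs k).le (sq_nonneg _))
    ⟨k, Finset.mem_univ k, mul_pos (hs k) (by positivity)⟩

theorem rpow_le_of_nonpos (hc : 0 < c) (h : ∀ k, c ≤ s k) (hr : r ≤ 0) (hp : p ≠ 0) :
    diagQuad s p ^ r ≤ c ^ r * ‖p‖ ^ (2 * r) := by
  calc diagQuad s p ^ r ≤ (c * ‖p‖ ^ 2) ^ r :=
        Real.rpow_le_rpow_of_nonpos (by positivity) (mul_norm_sq_le h p) hr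
    _ = c ^ r * ‖p‖ ^ (2 * r) := by
        rw [Real.mul_rpow hc.le (by positivity), Real.rpow_mul (norm_nonneg p), Real.rpow_two]

theorem rpow_le_of_nonneg (hs : ∀ k, 0 ≤ s k) (hr : 0 ≤ r) (p : EuclideanSpace ℝ ι) :
    diagQuad s p ^ r ≤ ‖s‖ ^ r * ‖p‖ ^ (2 * r) := by
  calc diagQuad s p ^ r ≤ (‖s‖ * ‖p‖ ^ 2) ^ r :=
        Real.rpow_le_rpow (nonneg hs p) ((le_abs_self _).trans (abs_le_norm_mul_norm_sq s p)) hr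
    _ = ‖s‖ ^ r * ‖p‖ ^ (2 * r) := by
        rw [Real.mul_rpow (norm_nonneg s) (by positivity), Real.rpow_mul (norm_nonneg p),
          Real.rpow_two]

theorem exists_pos_lt [Nonempty ι] (hs : ∀ k, 0 < s k) : ∃ c, 0 < c ∧ ∀ k, c < s k := by
  obtain ⟨k₀, hk₀⟩ := Finite.exists_min s
  exact ⟨s k₀ / 2, half_pos (hs k₀), fun k => (half_lt_self (hs k₀)).trans_le (hk₀ k)⟩

theorem exists_rpow_le [Nonempty ι] (hs : ∀ k, 0 < s k) (r : ℝ) :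
    ∃ C, ∀ p : EuclideanSpace ℝ ι, p ≠ 0 → diagQuad s p ^ r ≤ C * ‖p‖ ^ (2 * r) := by
  rcases le_total r 0 with hr | hr
  · obtain ⟨c, hc, hcs⟩ := exists_pos_lt hs
    exact ⟨c ^ r, fun p hp => rpow_le_of_nonpos hc (fun k => (hcs k).le) hr hp⟩
  · exact ⟨‖s‖ ^ r, fun p _ => rpow_le_of_nonneg (fun k => (hs k).le) hr p⟩

end diagQuad

def diagQuadCLM (p : EuclideanSpace ℝ ι) : (ι → ℝ) →L[ℝ] ℝ :=
  ∑ k, (p k ^ 2) • ContinuousLinearMap.proj k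

namespace diagQuadCLM

@[simp]
theorem apply (p : EuclideanSpace ℝ ι) (s : ι → ℝ) : diagQuadCLM p s = diagQuad s p := by
  simp [diagQuadCLM, diagQuad, mul_comm]

theorem norm_le (p : EuclideanSpace ℝ ι) : ‖diagQuadCLM p‖ ≤ ‖p‖ ^ 2 := by
  refine ContinuousLinearMap.opNorm_le_bound _ (by positivity) fun s => ?_
  rw [apply, Real.norm_eq_abs, mul_comm]
  exact diagQuad.abs_le_norm_mul_norm_sq s p

theorem continuous : Continuous (diagQuadCLM : EuclideanSpace ℝ ι → _) := by
  unfold diagQuadCLM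
  fun_prop

end diagQuadCLM

theorem hasFDerivAt_rpow_diagQuad {s : ι → ℝ} {p : EuclideanSpace ℝ ι} (r : ℝ)
    (hp : diagQuad s p ≠ 0) :
    HasFDerivAt (fun s => diagQuad s p ^ r)
      ((r * diagQuad s p ^ (r - 1)) • diagQuadCLM p) s := by
  simpa using ((diagQuadCLM p).hasFDerivAt (x := s)).rpow_const (p := r) (Or.inl (by simpa using hp))

/-- The exponent makes `|w p| * diagQuad s p ^ r = O(‖p‖)`, so the moments of `f` exist as soon as
`f p * ‖p‖` is integrable. -/
def IsMomentWeight (r : ℝ) (w : EuclideanSpace ℝ ι → ℝ) : Prop :=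
  Measurable w ∧ ∀ p, p ≠ 0 → |w p| ≤ ‖p‖ ^ (1 - 2 * r)

namespace IsMomentWeight

variable {r : ℝ} {w : EuclideanSpace ℝ ι → ℝ}

theorem abs_mul_norm_sq_le (hw : IsMomentWeight r w) {p : EuclideanSpace ℝ ι} (hp : p ≠ 0) :
    |w p| * ‖p‖ ^ 2 ≤ ‖p‖ ^ (1 - 2 * (r - 1)) := by
  rw [show 1 - 2 * (r - 1) = (1 - 2 * r) + 2 by ring, Real.rpow_add (norm_pos_iff.2 hp),
    Real.rpow_two]
  exact mul_le_mul_of_nonneg_right (hw.2 p hp) (sq_nonneg _)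

theorem mul_sq_coord (hw : IsMomentWeight r w) (j : ι) :
    IsMomentWeight (r - 1) fun p => w p * p j ^ 2 := by
  refine ⟨hw.1.mul ((EuclideanSpace.proj j).continuous.measurable.pow_const 2), fun p hp => ?_⟩
  have hj : p j ^ 2 ≤ ‖p‖ ^ 2 := by
    simpa using pow_le_pow_left₀ (norm_nonneg _) (PiLp.norm_apply_le p j) 2
  rw [abs_mul, abs_sq]
  exact (mul_le_mul_of_nonneg_left hj (abs_nonneg _)).trans (hw.abs_mul_norm_sq_le hp)

end IsMomentWeight

theorem isMomentWeight_one : IsMomentWeight (1 / 2) fun _ : EuclideanSpace ℝ ι => (1 : ℝ) :=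
  ⟨measurable_const, fun p _ => by norm_num⟩

theorem isMomentWeight_sq_coord (i : ι) :
    IsMomentWeight (-(1 : ℝ) / 2) fun p : EuclideanSpace ℝ ι => p i ^ 2 := by
  convert isMomentWeight_one.mul_sq_coord i using 1 <;> norm_num

noncomputable def diagMoment (f w : EuclideanSpace ℝ ι → ℝ) (r : ℝ) (s : ι → ℝ) : ℝ :=
  ∫ p, f p * w p * diagQuad s p ^ r

noncomputable def diagMomentFDeriv (f w : EuclideanSpace ℝ ι → ℝ) (r : ℝ) (s : ι → ℝ) :
    (ι → ℝ) →L[ℝ] ℝ :=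
  ∫ p, (f p * w p * (r * diagQuad s p ^ (r - 1))) • diagQuadCLM p

section Moments

variable {f w : EuclideanSpace ℝ ι → ℝ} {r : ℝ} {s : ι → ℝ}

theorem norm_diagMomentFDeriv_integrand_le (hw : IsMomentWeight r w) (hr : r ≤ 1) {c : ℝ}
    (hc : 0 < c) (hcs : ∀ k, c ≤ s k) {p : EuclideanSpace ℝ ι} (hp : p ≠ 0) :
    ‖(f p * w p * (r * diagQuad s p ^ (r - 1))) • diagQuadCLM p‖
      ≤ |r| * c ^ (r - 1) * ‖f p * ‖p‖‖ := by
  have hQ := Real.rpow_nonneg (diagQuad.nonneg (fun k => hc.le.trans (hcs k)) p) (r - 1)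
  have hdom : |w p| * ‖p‖ ^ 2 * diagQuad s p ^ (r - 1) ≤ c ^ (r - 1) * ‖p‖ :=
    mul_le_of_le_rpow_one_sub (norm_pos_iff.2 hp) (hw.abs_mul_norm_sq_le hp) hQ
      (diagQuad.rpow_le_of_nonpos hc hcs (by linarith) hp)
  rw [norm_smul, Real.norm_eq_abs, Real.norm_eq_abs, abs_mul, abs_mul, abs_mul, abs_mul, abs_norm,
    abs_of_nonneg hQ]
  calc |f p| * |w p| * (|r| * diagQuad s p ^ (r - 1)) * ‖diagQuadCLM p‖
      ≤ |f p| * |w p| * (|r| * diagQuad s p ^ (r - 1)) * ‖p‖ ^ 2 := by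
        gcongr
        exact diagQuadCLM.norm_le p
    _ = |r| * |f p| * (|w p| * ‖p‖ ^ 2 * diagQuad s p ^ (r - 1)) := by ring
    _ ≤ |r| * |f p| * (c ^ (r - 1) * ‖p‖) := by gcongr
    _ = |r| * c ^ (r - 1) * (|f p| * ‖p‖) := by ring

theorem measurable_diagMoment_integrand (hf : Measurable f) (hw : Measurable w) (s : ι → ℝ) :
    Measurable fun p => f p * w p * diagQuad s p ^ r :=
  (hf.mul hw).mul ((continuous_diagQuad s).measurable.pow_const r)

theorem aestronglyMeasurable_diagMomentFDeriv_integrand (hf : Measurable f) (hw : Measurable w) :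
    AEStronglyMeasurable fun p => (f p * w p * (r * diagQuad s p ^ (r - 1))) • diagQuadCLM p :=
  (hf.mul hw |>.mul (((continuous_diagQuad s).measurable.pow_const (r - 1)).const_mul
    r)).aestronglyMeasurable.smul (diagQuadCLM.continuous (ι := ι)).aestronglyMeasurable

variable [Nonempty ι]

theorem integrable_diagMoment (hf : Measurable f) (hfi : Integrable fun p => f p * ‖p‖)
    (hw : IsMomentWeight r w) (hs : ∀ k, 0 < s k) :
    Integrable fun p => f p * w p * diagQuad s p ^ r := by
  obtain ⟨C, hC⟩ := diagQuad.exists_rpow_le hs r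
  refine (hfi.norm.const_mul C).mono'
    (measurable_diagMoment_integrand hf hw.1 s).aestronglyMeasurable ?_
  filter_upwards [EuclideanSpace.ae_ne_zero] with p hp
  have hQ := Real.rpow_nonneg (diagQuad.nonneg (fun k => (hs k).le) p) r
  calc ‖f p * w p * diagQuad s p ^ r‖ = |f p| * (|w p| * diagQuad s p ^ r) := by
        rw [norm_mul, norm_mul, Real.norm_of_nonneg hQ, Real.norm_eq_abs, Real.norm_eq_abs,
          mul_assoc]
    _ ≤ |f p| * (C * ‖p‖) := mul_le_mul_of_nonneg_left
        (mul_le_of_le_rpow_one_sub (norm_pos_iff.2 hp) (hw.2 p hp) hQ (hC p hp)) (abs_nonneg _)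
    _ = C * ‖f p * ‖p‖‖ := by
        rw [norm_mul, norm_norm, Real.norm_eq_abs]
        ring

theorem hasFDerivAt_diagMoment (hf : Measurable f) (hfi : Integrable fun p => f p * ‖p‖)
    (hw : IsMomentWeight r w) (hr : r ≤ 1) (hs : ∀ k, 0 < s k) :
    HasFDerivAt (diagMoment f w r) (diagMomentFDeriv f w r s) s := by
  obtain ⟨c, hc, hcs⟩ := diagQuad.exists_pos_lt hs
  have hU : ∀ᶠ s' in 𝓝 s, ∀ k, c < s' k :=
    eventually_all.2 fun k => (continuous_apply k).continuousAt.eventually (Ioi_mem_nhds (hcs k))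
  refine hasFDerivAt_integral_of_dominated_of_fderiv_le
    (F := fun s p => f p * w p * diagQuad s p ^ r)
    (F' := fun s p => (f p * w p * (r * diagQuad s p ^ (r - 1))) • diagQuadCLM p)
    (bound := fun p => |r| * c ^ (r - 1) * ‖f p * ‖p‖‖) hU ?_
    (integrable_diagMoment hf hfi hw hs) ?_ ?_ (hfi.norm.const_mul _) ?_
  · exact Eventually.of_forall fun s' =>
      (measurable_diagMoment_integrand hf hw.1 s').aestronglyMeasurable
  · exact aestronglyMeasurable_diagMomentFDeriv_integrand hf hw.1
  · filter_upwards [EuclideanSpace.ae_ne_zero] with p hp s' hs'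
    exact norm_diagMomentFDeriv_integrand_le hw hr hc (fun k => (hs' k).le) hp
  · filter_upwards [EuclideanSpace.ae_ne_zero] with p hp s' hs'
    have hQ := diagQuad.pos (fun k => hc.trans (hs' k)) hp
    simpa only [smul_smul] using (hasFDerivAt_rpow_diagQuad r hQ.ne').const_mul (f p * w p)

theorem integrable_diagMomentFDeriv_integrand (hf : Measurable f)
    (hfi : Integrable fun p => f p * ‖p‖) (hw : IsMomentWeight r w) (hr : r ≤ 1)
    (hs : ∀ k, 0 < s k) :
    Integrable fun p => (f p * w p * (r * diagQuad s p ^ (r - 1))) • diagQuadCLM p := by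
  obtain ⟨c, hc, hcs⟩ := diagQuad.exists_pos_lt hs
  refine (hfi.norm.const_mul (|r| * c ^ (r - 1))).mono'
    (aestronglyMeasurable_diagMomentFDeriv_integrand hf hw.1) ?_
  filter_upwards [EuclideanSpace.ae_ne_zero] with p hp
  exact norm_diagMomentFDeriv_integrand_le hw hr hc (fun k => (hcs k).le) hp

theorem diagMomentFDeriv_apply_single [DecidableEq ι] (hf : Measurable f)
    (hfi : Integrable fun p => f p * ‖p‖) (hw : IsMomentWeight r w) (hr : r ≤ 1)
    (hs : ∀ k, 0 < s k) (j : ι) :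
    diagMomentFDeriv f w r s (Pi.single j 1)
      = r * diagMoment f (fun p => w p * p j ^ 2) (r - 1) s := by
  rw [diagMomentFDeriv, ContinuousLinearMap.integral_apply
    (integrable_diagMomentFDeriv_integrand hf hfi hw hr hs), diagMoment, ← integral_const_mul]
  congr 1 with p
  simp only [smul_apply, diagQuadCLM.apply, diagQuad_single, smul_eq_mul]
  ring

theorem diagMoment_pos (hf : Measurable f) (hfi : Integrable fun p => f p * ‖p‖)
    (hf0 : ∀ p, 0 ≤ f p) (hne : ¬ ∀ᵐ p, f p = 0) (hw : IsMomentWeight r w)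
    (hwpos : ∀ᵐ p, 0 < w p) (hs : ∀ k, 0 < s k) : 0 < diagMoment f w r s := by
  have hQ : ∀ᵐ p, 0 < w p * diagQuad s p ^ r := by
    filter_upwards [hwpos, EuclideanSpace.ae_ne_zero] with p hwp hp
    exact mul_pos hwp (Real.rpow_pos_of_pos (diagQuad.pos hs hp) r)
  simpa only [diagMoment, mul_assoc] using integral_mul_pos_of_ae_pos (ae_of_all _ hf0) hne hQ
    (by simpa only [mul_assoc] using integrable_diagMoment hf hfi hw hs)

end Moments

theorem Yfun_eq_div_diagMoment (f₀ : EuclideanSpace ℝ (Fin 3) → ℝ) (i : Fin 3) :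
    Yfun f₀ i = fun s => diagMoment f₀ (fun p => p i ^ 2) (-(1 : ℝ) / 2) s
      / diagMoment f₀ (fun _ => 1) (1 / 2) s := by
  funext s
  simp only [Yfun, diagMoment, diagQuad, mul_one]

/-- `∂Y_i/∂s_j < 0` for every `i, j` and every `s` in the open simplex, provided
`f₀ ≥ 0` is not a.e. zero. -/
theorem Y_deriv_neg (f₀ : EuclideanSpace ℝ (Fin 3) → ℝ)
    (hmeas : Measurable f₀) (hnn : ∀ p, 0 ≤ f₀ p)
    (hne : ¬ (∀ᵐ p : EuclideanSpace ℝ (Fin 3), f₀ p = 0))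
    (hint : Integrable (fun p : EuclideanSpace ℝ (Fin 3) => f₀ p * ‖p‖))
    (i j : Fin 3) (s : Fin 3 → ℝ) (hs : ∀ k, 0 < s k) :
    fderiv ℝ (Yfun f₀ i) s (Pi.single j 1) < 0 := by
  have hwi : ∀ᵐ p : EuclideanSpace ℝ (Fin 3), 0 < p i ^ 2 :=
    (EuclideanSpace.ae_coord_ne_zero i).mono fun p hp => by positivity
  have hwj : ∀ᵐ p : EuclideanSpace ℝ (Fin 3), 0 < p j ^ 2 :=
    (EuclideanSpace.ae_coord_ne_zero j).mono fun p hp => by positivity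
  have hN := hasFDerivAt_diagMoment hmeas hint (isMomentWeight_sq_coord i) (by norm_num) hs
  have hD := hasFDerivAt_diagMoment hmeas hint isMomentWeight_one (by norm_num) hs
  have hNpos := diagMoment_pos hmeas hint hnn hne (isMomentWeight_sq_coord i) hwi hs
  have hDpos := diagMoment_pos hmeas hint hnn hne isMomentWeight_one
    (ae_of_all _ fun _ => one_pos) hs
  have hdNpos := diagMoment_pos hmeas hint hnn hne ((isMomentWeight_sq_coord i).mul_sq_coord j)
    (hwi.and hwj |>.mono fun p h => mul_pos h.1 h.2) hs
  have hdDpos := diagMoment_pos hmeas hint hnn hne (isMomentWeight_one.mul_sq_coord j)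
    (by simpa using hwj) hs
  rw [Yfun_eq_div_diagMoment, (hN.div hD hDpos.ne').fderiv]
  simp only [smul_apply, sub_apply, smul_eq_mul,
    diagMomentFDeriv_apply_single hmeas hint (isMomentWeight_sq_coord i) (by norm_num) hs,
    diagMomentFDeriv_apply_single hmeas hint isMomentWeight_one (by norm_num) hs]
  refine mul_neg_of_pos_of_neg (by positivity) ?_
  nlinarith
end

section
/- Let λ₀ be the real root of 15λ³ − 45λ² + 142λ − 128 = 0. Then there exist real α, β with α > β²/4 such that the quadratic form q(s̄, Σ) = (λ₀ α + (16/5)β) s̄² + (λ₀ − 2 − (2/3)β) F + (β(λ₀ − 1) + 24/5 − (4/3)α) s̄·Σ vanishes identically, where s̄² = Σ_i s̄_i², F = Σ_i Σ_i², s̄·Σ = Σ_i s̄_i Σ_i; concretely one may take β = 3(λ₀ − 2)/2 and α = −5λ₀β/16. -/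
/-!
Choosing `β` to kill the coefficient of `F` and `α` to kill the coefficient of `s̄²` leaves the
coefficient of `s̄·Σ` equal to the cubic `15λ³ − 45λ² + 142λ − 128` divided by `10λ`, so it vanishes
exactly at `λ₀`. Since the cubic is increasing and changes sign on `(1, 6/5)`, `λ₀` lies there, and on
all of `(0, 2)` the choice satisfies `α > β²/4`.
-/

noncomputable section

def optimalBeta (lam : ℝ) : ℝ := 3 * (lam - 2) / 2

def optimalAlpha (lam : ℝ) : ℝ := -16 * optimalBeta lam / (5 * lam)

theorem mem_Ioo_of_cubic_eq_zero {lam : ℝ}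
    (hroot : 15 * lam ^ 3 - 45 * lam ^ 2 + 142 * lam - 128 = 0) : lam ∈ Set.Ioo 1 (6 / 5) := by
  constructor
  · nlinarith [sq_nonneg (lam - 1)]
  · nlinarith [sq_nonneg (lam - 6 / 5), sq_nonneg lam]

theorem sq_optimalBeta_div_four_lt_optimalAlpha {lam : ℝ} (h0 : 0 < lam) (h2 : lam < 2) :
    optimalBeta lam ^ 2 / 4 < optimalAlpha lam := by
  rw [optimalAlpha, optimalBeta, div_lt_div_iff₀ (by norm_num) (by positivity)]
  nlinarith [sq_nonneg (lam - 1), mul_pos h0 (sub_pos.mpr h2)]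

theorem mul_optimalAlpha_add_optimalBeta_eq_zero {lam : ℝ} (h0 : lam ≠ 0) :
    lam * optimalAlpha lam + 16 / 5 * optimalBeta lam = 0 := by
  rw [optimalAlpha]
  field_simp
  ring

theorem sub_two_sub_optimalBeta_eq_zero (lam : ℝ) : lam - 2 - 2 / 3 * optimalBeta lam = 0 := by
  rw [optimalBeta]
  ring

theorem optimalBeta_mul_sub_one_add_sub_optimalAlpha_eq_zero {lam : ℝ} (h0 : lam ≠ 0)
    (hroot : 15 * lam ^ 3 - 45 * lam ^ 2 + 142 * lam - 128 = 0) :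
    optimalBeta lam * (lam - 1) + 24 / 5 - 4 / 3 * optimalAlpha lam = 0 := by
  rw [optimalAlpha, optimalBeta]
  field_simp
  linear_combination hroot

end

/-- For `λ₀` the real root of `15λ³ − 45λ² + 142λ − 128 = 0` there exist `α, β` with
`α > β²/4`, `β = 3(λ₀−2)/2`, such that the quadratic form `q` vanishes identically. -/
theorem optimal_q_vanishes (lam : ℝ)
    (hroot : 15 * lam ^ 3 - 45 * lam ^ 2 + 142 * lam - 128 = 0) :
    ∃ α β : ℝ, α > β ^ 2 / 4 ∧ β = 3 * (lam - 2) / 2 ∧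
      ∀ sb Sg : Fin 3 → ℝ,
        (lam * α + (16 / 5) * β) * (∑ i, sb i ^ 2) +
          (lam - 2 - (2 / 3) * β) * (∑ i, Sg i ^ 2) +
          (β * (lam - 1) + 24 / 5 - (4 / 3) * α) * (∑ i, sb i * Sg i) = 0 := by
  obtain ⟨hgt, hlt⟩ := mem_Ioo_of_cubic_eq_zero hroot
  have hpos : 0 < lam := by linarith
  refine ⟨optimalAlpha lam, optimalBeta lam,
    sq_optimalBeta_div_four_lt_optimalAlpha hpos (by linarith), rfl, fun sb Sg => ?_⟩
  rw [mul_optimalAlpha_add_optimalBeta_eq_zero hpos.ne', sub_two_sub_optimalBeta_eq_zero,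
    optimalBeta_mul_sub_one_add_sub_optimalAlpha_eq_zero hpos.ne' hroot]
  ring
end

section
/- Consider the linear system on ℝ⁶ given by Σ_i′ = −Σ_i + 3 s̄_i − (7/5) s̄_i − (4/5)(s̄_j + s̄_k) (for {i,j,k} = {1,2,3}) restricted to the invariant subspace {Σ₁+Σ₂+Σ₃ = 0, s̄₁+s̄₂+s̄₃ = 0}, together with s̄_i′ = −(2/3)Σ_i. Every solution with initial data in this subspace converges to 0 exponentially as τ → ∞. -/
/-!
Summing the equations, `∑ Σᵢ` solves `y' = -y` and then `∑ s̄ᵢ` is constant, so on the invariant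
subspace both sums vanish for all time. There each pair `(Σᵢ, s̄ᵢ)` decouples into the planar system
`x' = -x + (12/5) s`, `s' = -(2/3) x`, whose eigenvalues have real part `-1/2`. The quadratic form
`V = x² - x s + (87/20) s²` is comparable to `x² + s²` and satisfies `V' ≤ -(2/5) V` along the flow,
so `x² + s²` decays like `exp (-(2/5) τ)`.
-/

open Finset Real

theorem antitone_exp_mul_of_hasDerivAt_le {f f' : ℝ → ℝ} {c τ₀ : ℝ}
    (hf : ∀ u, HasDerivAt f (f' u) u) (hle : ∀ u, f' u ≤ c * f u) :
    Antitone fun u => exp (-c * (u - τ₀)) * f u := by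
  have hW : ∀ u, HasDerivAt (fun u => exp (-c * (u - τ₀)) * f u)
      (exp (-c * (u - τ₀)) * (f' u - c * f u)) u := by
    intro u
    have hlin : HasDerivAt (fun u => -c * (u - τ₀)) (-c) u := by
      simpa using ((hasDerivAt_id u).sub_const τ₀).const_mul (-c)
    exact (hlin.exp.fun_mul (hf u)).congr_deriv (by ring)
  refine antitone_of_deriv_nonpos (fun u => (hW u).differentiableAt) fun u => ?_
  rw [(hW u).deriv]
  exact mul_nonpos_of_nonneg_of_nonpos (exp_pos _).le (sub_nonpos.mpr (hle u))

theorem le_exp_mul_of_hasDerivAt_le {f f' : ℝ → ℝ} {c τ₀ τ : ℝ}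
    (hf : ∀ u, HasDerivAt f (f' u) u) (hle : ∀ u, f' u ≤ c * f u) (hτ : τ₀ ≤ τ) :
    f τ ≤ exp (c * (τ - τ₀)) * f τ₀ := by
  have h := antitone_exp_mul_of_hasDerivAt_le (τ₀ := τ₀) hf hle hτ
  simp only [sub_self, mul_zero, exp_zero, one_mul] at h
  calc f τ = exp (c * (τ - τ₀)) * (exp (-c * (τ - τ₀)) * f τ) := by
        rw [← mul_assoc, ← exp_add, neg_mul, add_neg_cancel, exp_zero, one_mul]
    _ ≤ exp (c * (τ - τ₀)) * f τ₀ := mul_le_mul_of_nonneg_left h (exp_pos _).le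

theorem eq_zero_of_hasDerivAt_const_mul_self {f : ℝ → ℝ} {c τ₀ : ℝ}
    (hf : ∀ u, HasDerivAt f (c * f u) u) (h₀ : f τ₀ = 0) (τ : ℝ) : f τ = 0 := by
  have hconst : ∀ u, HasDerivAt (fun u => exp (-c * u) * f u) 0 u := fun u =>
    (((hasDerivAt_id u).const_mul (-c)).exp.fun_mul (hf u)).congr_deriv (by simp; ring)
  have h := is_const_of_deriv_eq_zero (fun u => (hconst u).differentiableAt)
    (fun u => (hconst u).deriv) τ τ₀
  simpa [h₀, exp_ne_zero] using h

theorem abs_le_sqrt_mul_exp_of_sq_le {a A t : ℝ} (h : a ^ 2 ≤ A * exp (2 * t)) :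
    |a| ≤ √A * exp t := by
  have hexp : exp (2 * t) = exp t ^ 2 := by rw [← exp_nat_mul]; norm_num
  calc |a| ≤ √(A * exp (2 * t)) := Real.abs_le_sqrt h
    _ = √A * exp t := by rw [sqrt_mul' A (exp_pos _).le, hexp, sqrt_sq (exp_pos _).le]

/-- The coefficient `87/20` makes the cross term of the derivative along the flow vanish. -/
noncomputable def reducedLyapunov (x s : ℝ) : ℝ := x ^ 2 - x * s + 87 / 20 * s ^ 2

theorem hasDerivAt_reducedLyapunov {x s : ℝ → ℝ} {u : ℝ}
    (hx : HasDerivAt x (-x u + 12 / 5 * s u) u) (hs : HasDerivAt s (-(2 / 3) * x u) u) :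
    HasDerivAt (fun v => reducedLyapunov (x v) (s v)) (-(4 / 3) * x u ^ 2 - 12 / 5 * s u ^ 2) u :=
  (((hx.pow 2).sub (hx.fun_mul hs)).add ((hs.pow 2).const_mul (87 / 20))).congr_deriv
    (by ring)

theorem reducedLyapunov_deriv_le (a b : ℝ) :
    -(4 / 3) * a ^ 2 - 12 / 5 * b ^ 2 ≤ -(2 / 5) * reducedLyapunov a b := by
  unfold reducedLyapunov
  nlinarith [sq_nonneg (a + 3 / 14 * b), sq_nonneg b]

theorem sq_add_sq_le_two_mul_reducedLyapunov (a b : ℝ) :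
    a ^ 2 + b ^ 2 ≤ 2 * reducedLyapunov a b := by
  unfold reducedLyapunov
  nlinarith [sq_nonneg (a - b), sq_nonneg b]

theorem reducedLyapunov_le (a b : ℝ) : reducedLyapunov a b ≤ 5 * (a ^ 2 + b ^ 2) := by
  unfold reducedLyapunov
  nlinarith [sq_nonneg (a + b)]

theorem sq_add_sq_le_of_reduced {x s : ℝ → ℝ} {τ₀ τ : ℝ}
    (hx : ∀ u, HasDerivAt x (-x u + 12 / 5 * s u) u) (hs : ∀ u, HasDerivAt s (-(2 / 3) * x u) u)
    (hτ : τ₀ ≤ τ) :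
    x τ ^ 2 + s τ ^ 2 ≤ 10 * (x τ₀ ^ 2 + s τ₀ ^ 2) * exp (-(2 / 5) * (τ - τ₀)) := by
  have hV := le_exp_mul_of_hasDerivAt_le (fun u => hasDerivAt_reducedLyapunov (hx u) (hs u))
    (fun u => reducedLyapunov_deriv_le (x u) (s u)) hτ
  have hE := (exp_pos (-(2 / 5) * (τ - τ₀))).le
  nlinarith [sq_add_sq_le_two_mul_reducedLyapunov (x τ) (s τ),
    mul_le_mul_of_nonneg_left (reducedLyapunov_le (x τ₀) (s τ₀)) hE]

theorem abs_le_of_reduced {x s : ℝ → ℝ} {τ₀ τ : ℝ}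
    (hx : ∀ u, HasDerivAt x (-x u + 12 / 5 * s u) u) (hs : ∀ u, HasDerivAt s (-(2 / 3) * x u) u)
    (hτ : τ₀ ≤ τ) :
    |x τ| ≤ √(10 * (x τ₀ ^ 2 + s τ₀ ^ 2)) * exp (-(1 / 5) * (τ - τ₀)) ∧
      |s τ| ≤ √(10 * (x τ₀ ^ 2 + s τ₀ ^ 2)) * exp (-(1 / 5) * (τ - τ₀)) := by
  have h := sq_add_sq_le_of_reduced hx hs hτ
  rw [show -(2 / 5) * (τ - τ₀) = 2 * (-(1 / 5) * (τ - τ₀)) by ring] at h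
  exact ⟨abs_le_sqrt_mul_exp_of_sq_le (by nlinarith [sq_nonneg (s τ)]),
    abs_le_sqrt_mul_exp_of_sq_le (by nlinarith [sq_nonneg (x τ)])⟩

/-- The linearized diagonal Bianchi I system on the invariant subspace
`{ΣΣᵢ = 0, Σs̄ᵢ = 0}` is exponentially stable. -/
theorem linearized_system_exp_stable (Sg sb : ℝ → Fin 3 → ℝ) (τ₀ : ℝ)
    (hSg : ∀ τ : ℝ, ∀ i : Fin 3, HasDerivAt (fun u => Sg u i)
      (-(Sg τ i) + 3 * sb τ i - (7 / 5) * sb τ i -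
        (4 / 5) * ((∑ j, sb τ j) - sb τ i)) τ)
    (hsb : ∀ τ : ℝ, ∀ i : Fin 3, HasDerivAt (fun u => sb u i) (-(2 / 3) * Sg τ i) τ)
    (hS0 : ∑ i, Sg τ₀ i = 0) (hs0 : ∑ i, sb τ₀ i = 0) :
    ∃ C μ : ℝ, 0 < C ∧ 0 < μ ∧ ∀ τ ≥ τ₀, ∀ i : Fin 3,
      |Sg τ i| ≤ C * Real.exp (-μ * (τ - τ₀)) ∧
      |sb τ i| ≤ C * Real.exp (-μ * (τ - τ₀)) := by
  have hSg_sum : ∀ τ, ∑ i, Sg τ i = 0 := eq_zero_of_hasDerivAt_const_mul_self (c := -1)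
    (fun τ => (HasDerivAt.fun_sum fun i _ => hSg τ i).congr_deriv
      (by simp only [Fin.sum_univ_three]; ring)) hS0
  have hsb_sum : ∀ τ, ∑ i, sb τ i = 0 := eq_zero_of_hasDerivAt_const_mul_self (c := 0)
    (fun τ => (HasDerivAt.fun_sum fun i _ => hsb τ i).congr_deriv
      (by rw [← mul_sum, hSg_sum, mul_zero, zero_mul])) hs0
  have hSg_reduced : ∀ i τ, HasDerivAt (fun u => Sg u i) (-Sg τ i + 12 / 5 * sb τ i) τ :=
    fun i τ => (hSg τ i).congr_deriv (by rw [hsb_sum]; ring)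
  set M := ∑ i, (Sg τ₀ i ^ 2 + sb τ₀ i ^ 2)
  refine ⟨1 + √(10 * M), 1 / 5, by positivity, by norm_num, fun τ hτ i => ?_⟩
  have hC : √(10 * (Sg τ₀ i ^ 2 + sb τ₀ i ^ 2)) ≤ 1 + √(10 * M) := by
    have hi : Sg τ₀ i ^ 2 + sb τ₀ i ^ 2 ≤ M :=
      single_le_sum (f := fun j => Sg τ₀ j ^ 2 + sb τ₀ j ^ 2) (fun j _ => by positivity)
        (mem_univ i)
    linarith [sqrt_le_sqrt (by linarith : 10 * (Sg τ₀ i ^ 2 + sb τ₀ i ^ 2) ≤ 10 * M)]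
  obtain ⟨hSg_le, hsb_le⟩ := abs_le_of_reduced (hSg_reduced i) (fun u => hsb u i) hτ
  have hE := (exp_pos (-(1 / 5) * (τ - τ₀))).le
  exact ⟨hSg_le.trans (mul_le_mul_of_nonneg_right hC hE),
    hsb_le.trans (mul_le_mul_of_nonneg_right hC hE)⟩
end
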